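/- Let 1 < p < 2 and μ₁(p) = inf over u ∈ W₂ \ {0} of [ (1/p)∫_Ω|∇u|^p + (1/2)∫_Ω|∇u|² ] / [ (1/2)∫_Ω a u² + (1/2)∫_{∂Ω} b u² dσ ], where W₂ = {u ∈ W^{1,2}(Ω) : ∫_Ω a u + ∫_{∂Ω} b u dσ = 0}, and ν₁ = inf over u ∈ W₂ \ {0} of ∫_Ω|∇u|² / (∫_Ω a u² + ∫_{∂Ω} b u² dσ). Then μ₁(p) = ν₁. In particular μ₁(p) does not depend on p for 1 < p < 2. -/

import Mathlib

open MeasureTheory Filter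
open scoped RealInnerProductSpace ENNReal Topology NNReal

noncomputable section

variable {N : ℕ}

/-- Membership in the Sobolev space `W^{1,p}` with respect to the measure `μ`
(typically `volume.restrict Ω`): both `u` and its gradient are in `L^p(μ)`. -/
def MemW1p (p : ℝ) (μ : Measure (EuclideanSpace ℝ (Fin N)))
    (u : EuclideanSpace ℝ (Fin N) → ℝ) : Prop :=
  MemLp u (ENNReal.ofReal p) μ ∧ MemLp (fun x => gradient u x) (ENNReal.ofReal p) μ

/-- The `W^{1,p}` norm of `u`. -/
def W1pNorm (p : ℝ) (μ : Measure (EuclideanSpace ℝ (Fin N)))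
    (u : EuclideanSpace ℝ (Fin N) → ℝ) : ℝ :=
  (∫ x, |u x| ^ p ∂μ) ^ (1 / p) + (∫ x, ‖gradient u x‖ ^ p ∂μ) ^ (1 / p)

/-- The weak formulation of the eigenvalue equation for the `(p,2)`-Laplacian with
Steklov-type boundary condition: `u` satisfies the equation tested against all
`φ ∈ W^{1,r}`. -/
def WeakEq (p r : ℝ) (μ σ : Measure (EuclideanSpace ℝ (Fin N)))
    (a b : EuclideanSpace ℝ (Fin N) → ℝ) (lam : ℝ)
    (u : EuclideanSpace ℝ (Fin N) → ℝ) : Prop :=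
  ∀ φ : EuclideanSpace ℝ (Fin N) → ℝ, MemW1p r μ φ →
    (∫ x, ‖gradient u x‖ ^ (p - 2) * ⟪gradient u x, gradient φ x⟫ ∂μ)
      + (∫ x, ⟪gradient u x, gradient φ x⟫ ∂μ)
    = lam * (∫ x, a x * u x * φ x ∂μ) + lam * (∫ x, b x * u x * φ x ∂σ)

/-- `λ` is an eigenvalue (with eigenfunctions/test functions in `W^{1,r}`). -/
def IsEigen (p r : ℝ) (μ σ : Measure (EuclideanSpace ℝ (Fin N)))
    (a b : EuclideanSpace ℝ (Fin N) → ℝ) (lam : ℝ) : Prop :=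
  ∃ u : EuclideanSpace ℝ (Fin N) → ℝ,
    MemW1p r μ u ∧ ¬ u =ᵐ[μ] 0 ∧ WeakEq p r μ σ a b lam u

/-- The linear constraint defining the hyperplane `𝒲`. -/
def Cst (μ σ : Measure (EuclideanSpace ℝ (Fin N)))
    (a b u : EuclideanSpace ℝ (Fin N) → ℝ) : Prop :=
  (∫ x, a x * u x ∂μ) + (∫ x, b x * u x ∂σ) = 0

/-- The energy functional `I_λ`. -/
def Ifun (p : ℝ) (μ σ : Measure (EuclideanSpace ℝ (Fin N)))
    (a b : EuclideanSpace ℝ (Fin N) → ℝ) (lam : ℝ)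
    (u : EuclideanSpace ℝ (Fin N) → ℝ) : ℝ :=
  (1 / p) * (∫ x, ‖gradient u x‖ ^ p ∂μ) + (1 / 2) * (∫ x, ‖gradient u x‖ ^ (2 : ℝ) ∂μ)
    - (lam / 2) * (∫ x, a x * u x ^ (2 : ℕ) ∂μ) - (lam / 2) * (∫ x, b x * u x ^ (2 : ℕ) ∂σ)

/-- The Rayleigh quotient defining `λ₁(p)` resp. `μ₁(p)`. -/
def Rayleigh (p : ℝ) (μ σ : Measure (EuclideanSpace ℝ (Fin N)))
    (a b : EuclideanSpace ℝ (Fin N) → ℝ) (u : EuclideanSpace ℝ (Fin N) → ℝ) : ℝ :=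
  ((1 / p) * (∫ x, ‖gradient u x‖ ^ p ∂μ) + (1 / 2) * (∫ x, ‖gradient u x‖ ^ (2 : ℝ) ∂μ)) /
    ((1 / 2) * (∫ x, a x * u x ^ (2 : ℕ) ∂μ) + (1 / 2) * (∫ x, b x * u x ^ (2 : ℕ) ∂σ))

/-- The set of Rayleigh quotients over `𝒲_r \ {0}` (with positive denominator),
whose infimum is `λ₁(p)` (for `r = p > 2`) resp. `μ₁(p)` (for `r = 2`, `1 < p < 2`). -/
def RayleighSet (p r : ℝ) (μ σ : Measure (EuclideanSpace ℝ (Fin N)))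
    (a b : EuclideanSpace ℝ (Fin N) → ℝ) : Set ℝ :=
  {t : ℝ | ∃ u : EuclideanSpace ℝ (Fin N) → ℝ, MemW1p r μ u ∧ ¬ u =ᵐ[μ] 0 ∧
    Cst μ σ a b u ∧
    0 < (1 / 2) * (∫ x, a x * u x ^ (2 : ℕ) ∂μ) + (1 / 2) * (∫ x, b x * u x ^ (2 : ℕ) ∂σ) ∧
    t = Rayleigh p μ σ a b u}

/-- Membership in the Nehari manifold `𝒩_λ ⊂ 𝒲₂ \ {0}`. -/
def Nehari (p : ℝ) (μ σ : Measure (EuclideanSpace ℝ (Fin N)))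
    (a b : EuclideanSpace ℝ (Fin N) → ℝ) (lam : ℝ)
    (u : EuclideanSpace ℝ (Fin N) → ℝ) : Prop :=
  MemW1p 2 μ u ∧ ¬ u =ᵐ[μ] 0 ∧ Cst μ σ a b u ∧
    (∫ x, ‖gradient u x‖ ^ p ∂μ) + (∫ x, ‖gradient u x‖ ^ (2 : ℝ) ∂μ)
      = lam * (∫ x, a x * u x ^ (2 : ℕ) ∂μ) + lam * (∫ x, b x * u x ^ (2 : ℕ) ∂σ)

/-- The set of simplified Rayleigh quotients whose infimum is `ν₁`. -/
def NuSet (r : ℝ) (μ σ : Measure (EuclideanSpace ℝ (Fin N)))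
    (a b : EuclideanSpace ℝ (Fin N) → ℝ) : Set ℝ :=
  {t : ℝ | ∃ u : EuclideanSpace ℝ (Fin N) → ℝ, MemW1p r μ u ∧ ¬ u =ᵐ[μ] 0 ∧
    Cst μ σ a b u ∧
    0 < (∫ x, a x * u x ^ 2 ∂μ) + (∫ x, b x * u x ^ 2 ∂σ) ∧
    t = (∫ x, ‖gradient u x‖ ^ (2 : ℝ) ∂μ) /
      ((∫ x, a x * u x ^ 2 ∂μ) + (∫ x, b x * u x ^ 2 ∂σ))}


/-!
For fixed `u`, write `A_q = ∫ |∇u|^q` and `D = ∫ a u² + ∫ b u² dσ`. The `μ₁`-quotient of `u` is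
`2 A_p / (p D) + A_2 / D`, which dominates the `ν₁`-quotient `A_2 / D`. Replacing `u` by `t u`
keeps the constraint and the `ν₁`-quotient, and multiplies the first term by `t ^ (p - 2)`,
which tends to `0` as `t → ∞` because `p < 2`. So the two infima coincide, and the common value
`ν₁` does not involve `p`.
-/

theorem integral_mul_const_smul_sq {α : Type*} [MeasurableSpace α] (ν : Measure α)
    (w u : α → ℝ) (t : ℝ) :
    ∫ x, w x * (t • u) x ^ 2 ∂ν = t ^ 2 * ∫ x, w x * u x ^ 2 ∂ν := by
  simp_rw [Pi.smul_apply, smul_eq_mul, mul_pow, mul_left_comm (w _)]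
  exact integral_const_mul _ _

section Scaling

variable {F : Type*} [NormedAddCommGroup F] [InnerProductSpace ℝ F] [CompleteSpace F]

theorem gradient_const_smul (c : ℝ) (u : F → ℝ) : gradient (c • u) = c • gradient u := by
  ext1 x
  simp only [gradient, fderiv_const_smul_field, Pi.smul_apply, map_smul]

variable [MeasurableSpace F]

theorem integral_norm_gradient_const_smul_rpow (ν : Measure F) (u : F → ℝ) {t : ℝ} (ht : 0 ≤ t)
    (q : ℝ) : ∫ x, ‖gradient (t • u) x‖ ^ q ∂ν = t ^ q * ∫ x, ‖gradient u x‖ ^ q ∂ν := by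
  simp_rw [gradient_const_smul, Pi.smul_apply, norm_smul, Real.norm_of_nonneg ht,
    Real.mul_rpow ht (norm_nonneg _)]
  exact integral_const_mul _ _

end Scaling

variable {p r : ℝ} {μ σ : Measure (EuclideanSpace ℝ (Fin N))}
  {a b u : EuclideanSpace ℝ (Fin N) → ℝ}

theorem MemW1p.const_smul (hu : MemW1p r μ u) (t : ℝ) : MemW1p r μ (t • u) := by
  refine ⟨hu.1.const_smul t, ?_⟩
  simp_rw [gradient_const_smul, Pi.smul_apply]
  exact hu.2.const_smul t

theorem Cst.const_smul (hu : Cst μ σ a b u) (t : ℝ) : Cst μ σ a b (t • u) := by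
  unfold Cst at hu ⊢
  simp_rw [Pi.smul_apply, smul_eq_mul, mul_left_comm (a _), mul_left_comm (b _),
    integral_const_mul, ← mul_add, hu, mul_zero]

theorem Rayleigh_eq_add (p : ℝ) (μ σ : Measure (EuclideanSpace ℝ (Fin N)))
    (a b u : EuclideanSpace ℝ (Fin N) → ℝ) :
    Rayleigh p μ σ a b u =
      2 * (∫ x, ‖gradient u x‖ ^ p ∂μ) /
          (p * ((∫ x, a x * u x ^ 2 ∂μ) + ∫ x, b x * u x ^ 2 ∂σ))
        + (∫ x, ‖gradient u x‖ ^ (2 : ℝ) ∂μ) /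
          ((∫ x, a x * u x ^ 2 ∂μ) + ∫ x, b x * u x ^ 2 ∂σ) := by
  rw [Rayleigh, ← mul_add]
  simp only [div_eq_mul_inv, mul_inv]
  ring

theorem Rayleigh_const_smul (p : ℝ) (μ σ : Measure (EuclideanSpace ℝ (Fin N)))
    (a b u : EuclideanSpace ℝ (Fin N) → ℝ) {t : ℝ} (ht : 0 < t) :
    Rayleigh p μ σ a b (t • u) =
      2 * (∫ x, ‖gradient u x‖ ^ p ∂μ) /
          (p * ((∫ x, a x * u x ^ 2 ∂μ) + ∫ x, b x * u x ^ 2 ∂σ)) * t ^ (p - 2)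
        + (∫ x, ‖gradient u x‖ ^ (2 : ℝ) ∂μ) /
          ((∫ x, a x * u x ^ 2 ∂μ) + ∫ x, b x * u x ^ 2 ∂σ) := by
  have ht_sq : t ^ (2 : ℝ) = t ^ 2 := Real.rpow_two t
  have ht_pow : t ^ p = t ^ (p - 2) * t ^ 2 := by
    rw [← ht_sq, ← Real.rpow_add ht, sub_add_cancel]
  rw [Rayleigh_eq_add, integral_norm_gradient_const_smul_rpow _ _ ht.le,
    integral_norm_gradient_const_smul_rpow _ _ ht.le, integral_mul_const_smul_sq,
    integral_mul_const_smul_sq, ← mul_add, ht_pow, ht_sq]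
  field_simp

theorem div_le_Rayleigh (hp : 0 ≤ p)
    (hD : 0 ≤ (∫ x, a x * u x ^ 2 ∂μ) + ∫ x, b x * u x ^ 2 ∂σ) :
    (∫ x, ‖gradient u x‖ ^ (2 : ℝ) ∂μ) / ((∫ x, a x * u x ^ 2 ∂μ) + ∫ x, b x * u x ^ 2 ∂σ)
      ≤ Rayleigh p μ σ a b u := by
  have hA : 0 ≤ ∫ x, ‖gradient u x‖ ^ p ∂μ :=
    integral_nonneg fun x => Real.rpow_nonneg (norm_nonneg _) p
  rw [Rayleigh_eq_add]
  exact le_add_of_nonneg_left (by positivity)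

theorem tendsto_Rayleigh_const_smul_atTop (hp : p < 2) :
    Tendsto (fun t : ℝ => Rayleigh p μ σ a b (t • u)) atTop
      (𝓝 ((∫ x, ‖gradient u x‖ ^ (2 : ℝ) ∂μ) /
        ((∫ x, a x * u x ^ 2 ∂μ) + ∫ x, b x * u x ^ 2 ∂σ))) := by
  have h_pow : Tendsto (fun t : ℝ => t ^ (p - 2)) atTop (𝓝 0) := by
    simpa only [neg_sub] using tendsto_rpow_neg_atTop (sub_pos.2 hp)
  have h_lim := (h_pow.const_mul (2 * (∫ x, ‖gradient u x‖ ^ p ∂μ) /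
    (p * ((∫ x, a x * u x ^ 2 ∂μ) + ∫ x, b x * u x ^ 2 ∂σ)))).add_const
    ((∫ x, ‖gradient u x‖ ^ (2 : ℝ) ∂μ) / ((∫ x, a x * u x ^ 2 ∂μ) + ∫ x, b x * u x ^ 2 ∂σ))
  rw [mul_zero, zero_add] at h_lim
  refine h_lim.congr' ?_
  filter_upwards [eventually_gt_atTop 0] with t ht
  exact (Rayleigh_const_smul p μ σ a b u ht).symm

theorem const_smul_mem_RayleighSet (hu : MemW1p r μ u) (hu0 : ¬u =ᵐ[μ] 0)
    (hc : Cst μ σ a b u) (hD : 0 < (∫ x, a x * u x ^ 2 ∂μ) + ∫ x, b x * u x ^ 2 ∂σ)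
    {t : ℝ} (ht : t ≠ 0) : Rayleigh p μ σ a b (t • u) ∈ RayleighSet p r μ σ a b := by
  refine ⟨t • u, hu.const_smul t, ?_, hc.const_smul t, ?_, rfl⟩
  · refine fun h => hu0 ?_
    filter_upwards [h] with x hx
    simpa [ht] using hx
  · rw [integral_mul_const_smul_sq, integral_mul_const_smul_sq, ← mul_add, ← mul_add]
    positivity

theorem csInf_eq_csInf_of_exists_le_of_csInf_le {α : Type*} [ConditionallyCompleteLattice α]
    {S T : Set α} (hT : BddBelow T) (hST : ∀ s ∈ S, ∃ t ∈ T, t ≤ s)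
    (hTS : ∀ t ∈ T, sInf S ≤ t) (hne : T.Nonempty → S.Nonempty) : sInf S = sInf T := by
  rcases T.eq_empty_or_nonempty with rfl | hT_ne
  · suffices S = ∅ by rw [this]
    exact Set.eq_empty_of_forall_notMem fun s hs => by simpa using hST s hs
  refine le_antisymm (le_csInf hT_ne hTS) (le_csInf (hne hT_ne) fun s hs => ?_)
  obtain ⟨t, ht, hts⟩ := hST s hs
  exact (csInf_le hT ht).trans hts

theorem sInf_RayleighSet_eq_sInf_NuSet (hp0 : 0 ≤ p) (hp2 : p < 2) :
    sInf (RayleighSet p r μ σ a b) = sInf (NuSet r μ σ a b) := by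
  have hNu_nonneg : ∀ s ∈ NuSet r μ σ a b, 0 ≤ s := by
    rintro _ ⟨u, -, -, -, hD, rfl⟩
    exact div_nonneg (integral_nonneg fun x => Real.rpow_nonneg (norm_nonneg _) _) hD.le
  have hST : ∀ s ∈ RayleighSet p r μ σ a b, ∃ t ∈ NuSet r μ σ a b, t ≤ s := by
    rintro _ ⟨u, hu, hu0, hc, hD, rfl⟩
    have hD' : 0 < (∫ x, a x * u x ^ 2 ∂μ) + ∫ x, b x * u x ^ 2 ∂σ := by linarith
    exact ⟨_, ⟨u, hu, hu0, hc, hD', rfl⟩, div_le_Rayleigh hp0 hD'.le⟩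
  have hR_bdd : BddBelow (RayleighSet p r μ σ a b) := ⟨0, fun s hs => by
    obtain ⟨t, ht, hts⟩ := hST s hs
    exact (hNu_nonneg t ht).trans hts⟩
  refine csInf_eq_csInf_of_exists_le_of_csInf_le ⟨0, hNu_nonneg⟩ hST ?_ ?_
  · rintro _ ⟨u, hu, hu0, hc, hD, rfl⟩
    refine ge_of_tendsto (tendsto_Rayleigh_const_smul_atTop hp2) ?_
    filter_upwards [eventually_gt_atTop 0] with t ht
    exact csInf_le hR_bdd (const_smul_mem_RayleighSet hu hu0 hc hD ht.ne')
  · rintro ⟨_, u, hu, hu0, hc, hD, rfl⟩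
    exact ⟨_, const_smul_mem_RayleighSet hu hu0 hc hD one_ne_zero⟩

theorem stmt_11_general (p : ℝ) (hp1 : 1 < p) (hp2 : p < 2)
    (μ σ : Measure (EuclideanSpace ℝ (Fin N)))
    (a b : EuclideanSpace ℝ (Fin N) → ℝ) :
    sInf (RayleighSet p 2 μ σ a b) = sInf (NuSet 2 μ σ a b) ∧
    (∀ q : ℝ, 1 < q → q < 2 →
      sInf (RayleighSet p 2 μ σ a b) = sInf (RayleighSet q 2 μ σ a b)) :=
  ⟨sInf_RayleighSet_eq_sInf_NuSet (by linarith) hp2, fun q hq1 hq2 =>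
    (sInf_RayleighSet_eq_sInf_NuSet (by linarith) hp2).trans
      (sInf_RayleighSet_eq_sInf_NuSet (by linarith) hq2).symm⟩

/-- for 1 < p < 2, μ₁(p) = ν₁; in particular μ₁(p) does not depend on p. -/
theorem stmt_11 (p : ℝ) (hp1 : 1 < p) (hp2 : p < 2)
    (Ω : Set (EuclideanSpace ℝ (Fin N))) (hΩo : IsOpen Ω) (hΩb : Bornology.IsBounded Ω)
    (μ σ : Measure (EuclideanSpace ℝ (Fin N))) [IsFiniteMeasure σ]
    (hμ : μ = MeasureTheory.volume.restrict Ω) (hσfr : σ (frontier Ω)ᶜ = 0)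
    (a b : EuclideanSpace ℝ (Fin N) → ℝ)
    (ha0 : ∀ᵐ x ∂μ, 0 ≤ a x) (hb0 : ∀ᵐ x ∂σ, 0 ≤ b x)
    (haInt : Integrable a μ) (hbInt : Integrable b σ)
    (hab : 0 < (∫ x, a x ∂μ) + (∫ x, b x ∂σ)) :
    sInf (RayleighSet p 2 μ σ a b) = sInf (NuSet 2 μ σ a b) ∧
    (∀ q : ℝ, 1 < q → q < 2 →
      sInf (RayleighSet p 2 μ σ a b) = sInf (RayleighSet q 2 μ σ a b)) :=
  stmt_11_general p hp1 hp2 μ σ a b
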